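/- arXiv:2401.09708 — 4 statements merged into one kernel-verified Lean document; each statement's English description precedes it below -/
import Mathlib

section
/- For every integer N ≥ 2, every simple circuit on N sites is equivalent to the double-staircase circuit F_p for some p ∈ {1, …, N−1}. -/
/-- A simple circuit on `N` sites: a sequence (indexed by time `Fin N`, 0-indexed)
of residues modulo `N` in which every residue occurs exactly once. -/
def IsSimpleCircuit (N : ℕ) (F : Fin N → ZMod N) : Prop := Function.Bijective F

/-- Swap move: swap time-adjacent entries at (0-indexed) positions `k`, `k+1`
provided their difference is not ≡ -1, 0, 1 (mod N). -/
def SwapMove (N : ℕ) (F G : Fin N → ZMod N) : Prop :=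
  ∃ k : ℕ, ∃ h : k + 1 < N,
    F ⟨k, Nat.lt_of_succ_lt h⟩ - F ⟨k + 1, h⟩ ≠ -1 ∧
    F ⟨k, Nat.lt_of_succ_lt h⟩ - F ⟨k + 1, h⟩ ≠ 0 ∧
    F ⟨k, Nat.lt_of_succ_lt h⟩ - F ⟨k + 1, h⟩ ≠ 1 ∧
    G = F ∘ Equiv.swap ⟨k, Nat.lt_of_succ_lt h⟩ ⟨k + 1, h⟩

/-- Cyclic-shift move: `(i₁, i₂, …, i_N) ↦ (i₂, …, i_N, i₁)`. -/
def CycMove (N : ℕ) (F G : Fin N → ZMod N) : Prop :=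
  G = F ∘ (finRotate N)

/-- Equivalence of circuits: finitely many swap/cyclic moves. -/
def CircuitEquiv (N : ℕ) : (Fin N → ZMod N) → (Fin N → ZMod N) → Prop :=
  Relation.EqvGen (fun F G => SwapMove N F G ∨ CycMove N F G)

/-- The set `Q_N` of admissible pairs `(q, r)`. -/
def QN (N : ℕ) : Set (ℕ × ℕ) :=
  {qr | 2 ≤ qr.1 ∧ qr.1 ≤ N ∧ qr.1 ∣ N ∧ 1 ≤ qr.2 ∧ qr.2 < qr.1 ∧ Nat.gcd qr.1 qr.2 = 1}

/-- The canonical circuit `F_{q,r}`: the entry at 0-indexed time `l = j·(N/q) + i`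
is the residue `1 + j·r + i·q (mod N)`. -/
def canonicalCircuit (N q r : ℕ) : Fin N → ZMod N :=
  fun l => ((1 + (l.val / (N / q)) * r + (l.val % (N / q)) * q : ℕ) : ZMod N)

/-- The double staircase circuit `F_p = (1, 2, …, N−p, N, N−1, …, N−p+1)`. -/
def doubleStaircase (N p : ℕ) : Fin N → ZMod N :=
  fun l => if l.val < N - p then ((l.val + 1 : ℕ) : ZMod N)
           else ((2 * N - p - l.val : ℕ) : ZMod N)

/-- The generalized staircase circuit `F_{N,r}`, whose entry at 1-indexed time `l`
is `1 + (l−1)·r (mod N)`. -/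
def staircase (N r : ℕ) : Fin N → ZMod N :=
  fun l => ((1 + l.val * r : ℕ) : ZMod N)

/-- The invariant `C(F)`: the number of (0-indexed) time indices `l` such that some
earlier entry equals `F l + 1 (mod N)`. -/
def Cinv (N : ℕ) (F : Fin N → ZMod N) : ℕ :=
  (Finset.univ.filter (fun l : Fin N => ∃ k : Fin N, k < l ∧ F k = F l + 1)).card

/-!
Record a circuit `e : Fin N ≃ ZMod N` by its descent set: the gates `i` whose right neighbour
`i + 1` is applied before `i`. Swapping two time-adjacent gates on non-neighbouring residues does
not change it; conversely, two circuits with the same descent set are connected by such swaps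
(bubble sort, terminating because the rearrangement sum `∑ x, tₑ x * t_f x` of the two time
functions strictly increases). If `i` is a descent and `i + 1` is not, gate `i + 1` precedes both
of its neighbours, so it can be swapped to the front and then cyclically shifted to the back;
this replaces `i` by `i + 1` in the descent set. Such moves carry every descent set of size `p`,
where `1 ≤ p ≤ N - 1`, to `{0, -1, …, -(p - 1)}`, the descent set of `F_p`.
-/

open Finset

lemma Fin.swap_lt_swap_iff_of_val_eq_succ {n : ℕ} {k l u v : Fin n} (hkl : (l : ℕ) = k + 1)
    (h₁ : ¬(u = k ∧ v = l)) (h₂ : ¬(u = l ∧ v = k)) :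
    Equiv.swap k l u < Equiv.swap k l v ↔ u < v := by
  simp only [Equiv.swap_apply_def, Fin.lt_def, Fin.ext_iff] at *
  split_ifs <;> omega

lemma Fin.cycleRange_lt_cycleRange_iff {n : ℕ} {m u v : Fin n} (hu : u ≠ m) (hv : v ≠ m) :
    m.cycleRange u < m.cycleRange v ↔ u < v := by
  have hval : ∀ w, w ≠ m → (m.cycleRange w : ℕ) = if w < m then (w : ℕ) + 1 else w := by
    intro w hw
    split_ifs with h
    · exact Fin.coe_cycleRange_of_lt h
    · rw [Fin.cycleRange_of_gt (lt_of_le_of_ne (not_lt.mp h) hw.symm)]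
  rw [Fin.lt_def, Fin.lt_def, hval u hu, hval v hv]
  have := Fin.val_ne_of_ne hu
  have := Fin.val_ne_of_ne hv
  simp only [Fin.lt_def]
  split_ifs <;> omega

lemma finRotate_symm_lt_finRotate_symm_iff {n : ℕ} [NeZero n] {u v : Fin n} :
    (finRotate n).symm u < (finRotate n).symm v ↔ v = 0 ∧ u ≠ 0 ∨ u ≠ 0 ∧ u < v := by
  obtain ⟨n, rfl⟩ := Nat.exists_eq_succ_of_ne_zero (NeZero.ne n)
  have := u.isLt
  simp only [Fin.lt_def, finRotate_symm_apply, Fin.coe_sub_one, ← Fin.val_eq_zero_iff, ne_eq]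
  split_ifs <;> omega

lemma Finset.exists_mem_ne_zero_sub_one_notMem {S : Finset ℕ} (h : S ≠ range #S) :
    ∃ x ∈ S, x ≠ 0 ∧ x - 1 ∉ S := by
  by_contra! hS
  have hdown : ∀ x ∈ S, range (x + 1) ⊆ S := by
    intro x
    induction x with
    | zero => simp
    | succ x ih =>
      intro hx y hy
      rcases (Nat.lt_succ_iff.mp (mem_range.mp hy)).eq_or_lt with rfl | hy
      · exact hx
      · exact ih (hS _ hx x.succ_ne_zero) (mem_range.mpr hy)
  refine h (eq_of_subset_of_card_le (fun x hx => mem_range.mpr ?_) (by simp))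
  simpa using card_le_card (hdown x hx)

lemma ZMod.val_neg_add_one {N : ℕ} [Fact (1 < N)] (i : ZMod N) :
    (-(i + 1)).val = if (-i).val = 0 then N - 1 else (-i).val - 1 := by
  rw [neg_add, ← sub_eq_add_neg]
  split_ifs with h
  · obtain ⟨n, rfl⟩ := Nat.exists_eq_succ_of_ne_zero (NeZero.ne N)
    rw [(ZMod.val_eq_zero _).mp h, zero_sub, ZMod.val_neg_one, Nat.succ_sub_one]
  · rw [ZMod.val_sub (by rw [ZMod.val_one]; omega), ZMod.val_one]

namespace CircuitEquiv

variable {N : ℕ} {F G H : Fin N → ZMod N}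

lemma refl (F : Fin N → ZMod N) : CircuitEquiv N F F := Relation.EqvGen.refl F

lemma trans (h₁ : CircuitEquiv N F G) (h₂ : CircuitEquiv N G H) : CircuitEquiv N F H :=
  Relation.EqvGen.trans _ _ _ h₁ h₂

lemma of_swapMove (h : SwapMove N F G) : CircuitEquiv N F G := Relation.EqvGen.rel _ _ (.inl h)

lemma of_cycMove (h : CycMove N F G) : CircuitEquiv N F G := Relation.EqvGen.rel _ _ (.inr h)

end CircuitEquiv

lemma SwapMove.comp_swap {N : ℕ} {F : Fin N → ZMod N} {k l : Fin N} (hkl : (l : ℕ) = k + 1)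
    (hne : F k ≠ F l) (h₁ : F l ≠ F k + 1) (h₂ : F k ≠ F l + 1) :
    SwapMove N F (F ∘ Equiv.swap k l) := by
  obtain ⟨k, hk⟩ := k
  obtain ⟨l, hl⟩ := l
  simp only at hkl
  subst hkl
  exact ⟨k, hl, fun h => h₁ (by linear_combination -h), sub_ne_zero.mpr hne,
    fun h => h₂ (by linear_combination h), rfl⟩

namespace Circuit

variable {N : ℕ} [NeZero N]

def descents (e : Fin N ≃ ZMod N) : Finset (ZMod N) := {i | e.symm (i + 1) < e.symm i}

@[simp]
lemma mem_descents {e : Fin N ≃ ZMod N} {i : ZMod N} :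
    i ∈ descents e ↔ e.symm (i + 1) < e.symm i := by
  simp [descents]

lemma ne_add_one_of_descents_eq {e f : Fin N ≃ ZMod N} (hD : descents e = descents f)
    {a b : ZMod N} (he : e.symm a < e.symm b) (hf : f.symm b < f.symm a) : b ≠ a + 1 := by
  rintro rfl
  have ha : a ∈ descents f := mem_descents.mpr hf
  rw [← hD, mem_descents] at ha
  exact lt_asymm he ha

lemma descents_swap_trans {e : Fin N ≃ ZMod N} {k l : Fin N} (hkl : (l : ℕ) = k + 1)
    (h₁ : e l ≠ e k + 1) (h₂ : e k ≠ e l + 1) :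
    descents ((Equiv.swap k l).trans e) = descents e := by
  ext i
  simp only [mem_descents, Equiv.symm_trans_apply, Equiv.symm_swap]
  refine Fin.swap_lt_swap_iff_of_val_eq_succ hkl ?_ ?_
  · rintro ⟨hk, hl⟩
    rw [Equiv.symm_apply_eq] at hk hl
    exact h₂ (by rw [← hk, ← hl])
  · rintro ⟨hl, hk⟩
    rw [Equiv.symm_apply_eq] at hk hl
    exact h₁ (by rw [← hk, ← hl])

def rearrangementSum (e f : Fin N ≃ ZMod N) : ℕ := ∑ x, (e.symm x : ℕ) * f.symm x

lemma rearrangementSum_le_pow (e f : Fin N ≃ ZMod N) : rearrangementSum e f ≤ N ^ 3 := calc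
  rearrangementSum e f ≤ ∑ _x : ZMod N, N * N :=
    sum_le_sum fun x _ => Nat.mul_le_mul (e.symm x).isLt.le (f.symm x).isLt.le
  _ = N ^ 3 := by rw [sum_const, card_univ, ZMod.card, smul_eq_mul]; ring

lemma rearrangementSum_lt_swap_trans {e f : Fin N ≃ ZMod N} {k l : Fin N}
    (hkl : (l : ℕ) = k + 1) (hinv : f.symm (e l) < f.symm (e k)) :
    rearrangementSum e f < rearrangementSum ((Equiv.swap k l).trans e) f := by
  have hkl' : k ≠ l := by simp [Fin.ext_iff, hkl]
  have hdiff : (rearrangementSum ((Equiv.swap k l).trans e) f : ℤ) - rearrangementSum e f =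
      (f.symm (e k) : ℤ) - f.symm (e l) := by
    simp only [rearrangementSum, Nat.cast_sum, Nat.cast_mul, ← sum_sub_distrib, ← sub_mul]
    rw [Fintype.sum_eq_add (e k) (e l) (e.injective.ne hkl')]
    · simp [hkl, ← sub_eq_add_neg]
    · rintro x ⟨hk, hl⟩
      rw [Equiv.symm_trans_apply, Equiv.symm_swap, Equiv.swap_apply_of_ne_of_ne, sub_self,
        zero_mul]
      · exact fun h => hk (by rw [← h, Equiv.apply_symm_apply])
      · exact fun h => hl (by rw [← h, Equiv.apply_symm_apply])
  have : (f.symm (e l) : ℕ) < f.symm (e k) := hinv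
  omega

lemma exists_adjacent_inversion {e f : Fin N ≃ ZMod N} (hef : e ≠ f) :
    ∃ k l : Fin N, (l : ℕ) = k + 1 ∧ f.symm (e l) < f.symm (e k) := by
  by_contra! h
  obtain ⟨n, rfl⟩ := Nat.exists_eq_succ_of_ne_zero (NeZero.ne N)
  have hmono : StrictMono (e.trans f.symm) := Fin.strictMono_iff_lt_succ.mpr fun k =>
    (h k.castSucc k.succ rfl).lt_of_ne ((e.trans f.symm).injective.ne Fin.castSucc_lt_succ.ne)
  have hid := Subsingleton.elim (hmono.orderIsoOfSurjective _ (e.trans f.symm).surjective)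
    (OrderIso.refl _)
  exact hef (Equiv.ext fun k => f.symm_apply_eq.mp (DFunLike.congr_fun hid k))

theorem circuitEquiv_of_descents_eq {e f : Fin N ≃ ZMod N} (h : descents e = descents f) :
    CircuitEquiv N e f := by
  induction hm : N ^ 3 - rearrangementSum e f using Nat.strong_induction_on generalizing e with
  | _ m ih =>
  by_cases hef : e = f
  · rw [hef]
    exact .refl _
  obtain ⟨k, l, hkl, hinv⟩ := exists_adjacent_inversion hef
  have hkl' : k < l := Fin.lt_def.mpr (by omega)
  have hlt : e.symm (e k) < e.symm (e l) := by simpa using hkl'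
  have h₁ := ne_add_one_of_descents_eq h hlt hinv
  have h₂ := ne_add_one_of_descents_eq h.symm hinv hlt
  have hswap := SwapMove.comp_swap hkl (e.injective.ne hkl'.ne) h₁ h₂
  refine (CircuitEquiv.of_swapMove hswap).trans
    (ih _ ?_ ((descents_swap_trans hkl h₁ h₂).trans h) rfl)
  have := rearrangementSum_lt_swap_trans hkl hinv
  have := rearrangementSum_le_pow ((Equiv.swap k l).trans e) f
  omega

lemma descents_cycleRange_symm_trans {e : Fin N ≃ ZMod N} {s : ZMod N}
    (h₁ : s - 1 ∈ descents e) (h₂ : s ∉ descents e) :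
    descents ((e.symm s).cycleRange.symm.trans e) = descents e := by
  ext i
  simp only [mem_descents, Equiv.symm_trans_apply, Equiv.symm_symm]
  by_cases hi : i = s
  · subst hi
    simpa [Fin.not_lt_zero] using h₂
  by_cases hi1 : i + 1 = s
  · obtain rfl : i = s - 1 := eq_sub_of_add_eq hi1
    rw [hi1, Fin.cycleRange_self]
    refine iff_of_true (Fin.pos_iff_ne_zero.mpr fun h => hi ?_) (by simpa using h₁)
    exact e.symm.injective
      ((e.symm s).cycleRange.injective (h.trans (Fin.cycleRange_self _).symm))
  · exact Fin.cycleRange_lt_cycleRange_iff (e.symm.injective.ne hi1) (e.symm.injective.ne hi)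

lemma descents_finRotate_trans [Fact (1 < N)] (g : Fin N ≃ ZMod N) :
    descents ((finRotate N).trans g) = insert (g 0) ((descents g).erase (g 0 - 1)) := by
  ext i
  simp only [mem_descents, Equiv.symm_trans_apply, mem_insert, mem_erase,
    finRotate_symm_lt_finRotate_symm_iff, Equiv.symm_apply_eq, ne_eq, eq_sub_iff_add_eq]
  by_cases hi : i = g 0
  · subst hi
    simp
  · simp [hi]

theorem exists_circuitEquiv_descents_eq_insert_erase [Fact (1 < N)] {e : Fin N ≃ ZMod N}
    {i : ZMod N} (hi : i ∈ descents e) (hi1 : i + 1 ∉ descents e) :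
    ∃ h : Fin N ≃ ZMod N, CircuitEquiv N e h ∧
      descents h = insert (i + 1) ((descents e).erase i) := by
  set g := (e.symm (i + 1)).cycleRange.symm.trans e
  have hg : descents g = descents e :=
    descents_cycleRange_symm_trans (by rwa [add_sub_cancel_right]) hi1
  have hg0 : g 0 = i + 1 := by simp [g, Fin.cycleRange_symm_zero]
  refine ⟨(finRotate N).trans g,
    (circuitEquiv_of_descents_eq hg.symm).trans (.of_cycMove rfl), ?_⟩
  rw [descents_finRotate_trans, hg0, hg, add_sub_cancel_right]

def negRange (N p : ℕ) [NeZero N] : Finset (ZMod N) := {i | (-i).val < p}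

lemma exists_mem_add_one_notMem_of_ne_negRange [Fact (1 < N)] {D : Finset (ZMod N)}
    (h : D ≠ negRange N #D) : ∃ i ∈ D, i + 1 ∉ D ∧ (-(i + 1)).val + 1 = (-i).val := by
  set φ : ZMod N → ℕ := fun i => (-i).val
  have hφ : Function.Injective φ := (ZMod.val_injective N).comp neg_injective
  obtain ⟨x, hx, hx0, hx1⟩ := exists_mem_ne_zero_sub_one_notMem (S := D.image φ) <| by
    refine fun himg => h (Finset.ext fun i => ?_)
    rw [negRange, mem_filter, ← card_image_of_injective D hφ, ← mem_range, ← himg,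
      hφ.mem_finset_image]
    simp
  obtain ⟨i, hi, rfl⟩ := mem_image.mp hx
  have hval : φ (i + 1) = φ i - 1 := by simp [φ, ZMod.val_neg_add_one, hx0]
  refine ⟨i, hi, fun h => hx1 (hval ▸ mem_image_of_mem φ h), ?_⟩
  simp only [φ] at hval hx0 ⊢
  omega

theorem negRange_card_of_forall_move [Fact (1 < N)] {P : Finset (ZMod N) → Prop}
    (hP : ∀ D i, P D → i ∈ D → i + 1 ∉ D → P (insert (i + 1) (D.erase i)))
    {D : Finset (ZMod N)} (hD : P D) : P (negRange N #D) := by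
  induction hm : ∑ i ∈ D, (-i).val using Nat.strong_induction_on generalizing D with
  | _ m ih =>
  by_cases hDn : D = negRange N #D
  · rwa [← hDn]
  obtain ⟨i, hi, hi1, hval⟩ := exists_mem_add_one_notMem_of_ne_negRange hDn
  have hi1' : i + 1 ∉ D.erase i := fun h => hi1 (mem_of_mem_erase h)
  have hcard : #(insert (i + 1) (D.erase i)) = #D := by
    rw [card_insert_of_notMem hi1', card_erase_add_one hi]
  rw [← hcard]
  refine ih _ ?_ (hP D i hD hi hi1) rfl
  rw [sum_insert hi1', ← hm, ← add_sum_erase D _ hi]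
  omega

theorem exists_circuitEquiv_descents_eq_negRange [Fact (1 < N)] (e : Fin N ≃ ZMod N) :
    ∃ g : Fin N ≃ ZMod N, CircuitEquiv N e g ∧ descents g = negRange N #(descents e) := by
  refine negRange_card_of_forall_move
    (P := fun D => ∃ g : Fin N ≃ ZMod N, CircuitEquiv N e g ∧ descents g = D)
    (fun D i ⟨g, heg, hg⟩ hi hi1 => ?_) ⟨e, .refl _, rfl⟩
  obtain ⟨h, hgh, hh⟩ := exists_circuitEquiv_descents_eq_insert_erase (hg ▸ hi) (hg ▸ hi1)
  exact ⟨h, heg.trans hgh, hg ▸ hh⟩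

lemma one_le_card_descents [Fact (1 < N)] (e : Fin N ≃ ZMod N) : 1 ≤ #(descents e) := by
  have := NeZero.pos N
  set x := e ⟨N - 1, by omega⟩
  have hne : e.symm (x + 1) ≠ e.symm x := e.symm.injective.ne (by simp)
  have := (e.symm (x + 1)).isLt
  refine card_pos.mpr ⟨x, mem_descents.mpr (Fin.lt_def.mpr ?_)⟩
  simp only [x, Equiv.symm_apply_apply, ne_eq, Fin.ext_iff] at hne ⊢
  omega

lemma card_descents_lt (e : Fin N ≃ ZMod N) : #(descents e) < N := by
  have : e 0 ∉ descents e := by simp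
  simpa [ZMod.card] using card_lt_univ_of_notMem this

section DoubleStaircase

variable {p : ℕ}

def doubleStaircaseTime (N p : ℕ) (i : ZMod N) : ℕ :=
  if p ≤ (-i).val then N - 1 - (-i).val else N - p + (-i).val

lemma doubleStaircaseTime_lt (hp : p ≤ N) (i : ZMod N) : doubleStaircaseTime N p i < N := by
  have := (-i).val_lt
  unfold doubleStaircaseTime
  split_ifs <;> omega

lemma doubleStaircase_doubleStaircaseTime (hp : p ≤ N) (i : ZMod N) :
    doubleStaircase N p ⟨doubleStaircaseTime N p i, doubleStaircaseTime_lt hp i⟩ = i := by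
  have hlt := (-i).val_lt
  have key : ((N - (-i).val : ℕ) : ZMod N) = i := by
    rw [Nat.cast_sub hlt.le, ZMod.natCast_self, ZMod.natCast_zmod_val, zero_sub, neg_neg]
  simp only [doubleStaircase, doubleStaircaseTime]
  split_ifs <;> convert key using 2 <;> omega

def doubleStaircaseEquiv (hp : p ≤ N) : Fin N ≃ ZMod N :=
  Equiv.ofRightInverseOfCardLE (by simp) (doubleStaircase N p)
    (fun i => ⟨doubleStaircaseTime N p i, doubleStaircaseTime_lt hp i⟩)
    (doubleStaircase_doubleStaircaseTime hp)

lemma descents_doubleStaircaseEquiv [Fact (1 < N)] (hp₁ : 1 ≤ p) (hp₂ : p < N) :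
    descents (doubleStaircaseEquiv hp₂.le) = negRange N p := by
  ext i
  have := (-i).val_lt
  simp only [mem_descents, doubleStaircaseEquiv, Equiv.ofRightInverseOfCardLE_symm_apply,
    Fin.lt_def, doubleStaircaseTime, ZMod.val_neg_add_one, negRange, mem_filter, mem_univ,
    true_and]
  split_ifs <;> omega

end DoubleStaircase

theorem exists_circuitEquiv_doubleStaircase [Fact (1 < N)] (e : Fin N ≃ ZMod N) :
    ∃ p, 1 ≤ p ∧ p < N ∧ CircuitEquiv N e (doubleStaircase N p) := by
  obtain ⟨g, heg, hg⟩ := exists_circuitEquiv_descents_eq_negRange e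
  have hp₁ := one_le_card_descents e
  have hp₂ := card_descents_lt e
  have hgF : descents g = descents (doubleStaircaseEquiv hp₂.le) := by
    rw [hg, descents_doubleStaircaseEquiv hp₁ hp₂]
  exact ⟨_, hp₁, hp₂, heg.trans (circuitEquiv_of_descents_eq hgF)⟩

end Circuit

/-- Every simple circuit on `N ≥ 2` sites is equivalent to the double
staircase circuit `F_p` for some `p ∈ {1, …, N−1}`. -/
theorem equivalent_to_doubleStaircase (N : ℕ) (hN : 2 ≤ N)
    (F : Fin N → ZMod N) (hF : IsSimpleCircuit N F) :
    ∃ p : ℕ, 1 ≤ p ∧ p ≤ N - 1 ∧ CircuitEquiv N F (doubleStaircase N p) := by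
  have : Fact (1 < N) := ⟨hN⟩
  obtain ⟨p, hp₁, hp₂, h⟩ :=
    Circuit.exists_circuitEquiv_doubleStaircase (Equiv.ofBijective F hF)
  exact ⟨p, hp₁, by omega, h⟩
end

section
/- Let N ≥ 2 and let r satisfy 1 ≤ r < N and gcd(r,N) = 1. Then r · C(F_{N,r}) ≡ 1 (mod N); that is, C(F_{N,r}) is the representative in {1, …, N−1} of the modular multiplicative inverse of r modulo N. In particular gcd(C(F_{N,r}), N) = 1. -/
/-! If `s` is the inverse of `r` modulo `N`, then `1 + k r ≡ (1 + l r) + 1` exactly when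
`k ≡ l + s`: in the staircase the successor of the entry at time `l` sits `s` steps later,
cyclically. It occurs earlier than `l` precisely when this shift wraps around, i.e. for the
last `s` times `l ≥ N - s`, so `C(F_{N,r}) = s`. -/

open Finset

lemma card_filter_sub_le_val {N s : ℕ} (hs : s ≤ N) : #{l : Fin N | N - s ≤ (l : ℕ)} = s := by
  have hlt := Fin.card_filter_val_lt (n := N) (m := N - s)
  have hsum := card_filter_add_card_filter_not (s := (univ : Finset (Fin N)))
    (fun l : Fin N => (l : ℕ) < N - s)
  simp only [not_lt, card_univ, Fintype.card_fin] at hsum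
  omega

lemma exists_lt_natCast_eq_add_iff {N s : ℕ} (hs : s < N) (l : Fin N) :
    (∃ k : Fin N, k < l ∧ ((k : ℕ) : ZMod N) = (l : ℕ) + s) ↔ N - s ≤ l := by
  rw [← Nat.cast_add]
  constructor
  · rintro ⟨k, hkl, hk⟩
    rw [ZMod.natCast_eq_natCast_iff', Nat.mod_eq_of_lt k.isLt] at hk
    rw [Fin.lt_def] at hkl
    by_contra! h
    rw [Nat.mod_eq_of_lt (by omega)] at hk
    omega
  · intro h
    refine ⟨⟨l + s - N, by omega⟩, Fin.lt_def.2 (by simp only; omega), ?_⟩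
    rw [Nat.cast_sub (by omega), ZMod.natCast_self, sub_zero]

lemma Cinv_eq_of_eq_add_one_iff {N s : ℕ} (hs : s < N) (F : Fin N → ZMod N)
    (hF : ∀ k l : Fin N, F k = F l + 1 ↔ ((k : ℕ) : ZMod N) = (l : ℕ) + s) :
    Cinv N F = s := by
  simp only [Cinv, hF, exists_lt_natCast_eq_add_iff hs]
  exact card_filter_sub_le_val hs.le

lemma staircase_eq_add_one_iff {N r : ℕ} (hr : r.Coprime N) (k l : Fin N) :
    staircase N r k = staircase N r l + 1 ↔
      ((k : ℕ) : ZMod N) = (l : ℕ) + ((ZMod.unitOfCoprime r hr)⁻¹ : (ZMod N)ˣ) := by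
  conv_rhs => rw [← Units.mul_left_inj (ZMod.unitOfCoprime r hr), add_mul, Units.inv_mul,
    ZMod.coe_unitOfCoprime]
  rw [staircase, staircase]
  push_cast
  constructor <;> intro h <;> linear_combination h

theorem Cinv_staircase_inverse_general (N r : ℕ) (hN : 2 ≤ N)
    (hgcd : Nat.gcd r N = 1) :
    r * Cinv N (staircase N r) ≡ 1 [MOD N] ∧
    1 ≤ Cinv N (staircase N r) ∧ Cinv N (staircase N r) ≤ N - 1 ∧
    Nat.gcd (Cinv N (staircase N r)) N = 1 := by
  have : NeZero N := ⟨by omega⟩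
  have : Nontrivial (ZMod N) := ZMod.nontrivial_iff.2 (by omega)
  set u : (ZMod N)ˣ := (ZMod.unitOfCoprime r hgcd)⁻¹
  have hC : Cinv N (staircase N r) = (u : ZMod N).val :=
    Cinv_eq_of_eq_add_one_iff (ZMod.val_lt _) _ fun k l => by
      rw [staircase_eq_add_one_iff hgcd, ZMod.natCast_zmod_val]
  rw [hC]
  refine ⟨?_, Nat.one_le_iff_ne_zero.2 ?_, Nat.le_sub_one_of_lt (ZMod.val_lt _),
    ZMod.val_coe_unit_coprime u⟩
  · rw [← ZMod.natCast_eq_natCast_iff]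
    push_cast
    rw [ZMod.natCast_zmod_val, ← ZMod.coe_unitOfCoprime r hgcd, Units.mul_inv]
  · rw [Ne, ZMod.val_eq_zero]
    exact u.ne_zero

/-- `r · C(F_{N,r}) ≡ 1 (mod N)`: the invariant `C(F_{N,r})` is the
representative in `{1, …, N−1}` of the modular inverse of `r` mod `N`; in particular it
is coprime with `N`. -/
theorem Cinv_staircase_inverse (N r : ℕ) (hN : 2 ≤ N) (hr1 : 1 ≤ r) (hrN : r < N)
    (hgcd : Nat.gcd r N = 1) :
    r * Cinv N (staircase N r) ≡ 1 [MOD N] ∧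
    1 ≤ Cinv N (staircase N r) ∧ Cinv N (staircase N r) ≤ N - 1 ∧
    Nat.gcd (Cinv N (staircase N r)) N = 1 :=
  Cinv_staircase_inverse_general N r hN hgcd
end

section
/- Fix a divisor q of N with 2 ≤ q < N. Then the map r ↦ C(F_{q,r}) is a bijection from the set {r : 1 ≤ r < q, gcd(q,r) = 1} onto the set {(N/q)·p : 1 ≤ p < q, gcd(p,q) = 1}. In particular, for every admissible r the value C(F_{q,r}) is a multiple of N/q of the form (N/q)·p with p coprime to q, distinct r give distinct values, and every such value is attained. -/
/-! Write `m = N / q` and let `s < q` be the inverse of `r` modulo `q`. The times of `F_{q,r}`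
fall into `q` consecutive blocks of length `m`, and block `j` lists exactly the residues
`≡ 1 + j r (mod q)`. So `F l + 1` sits in block `j + s (mod q)`, where `j` is the block of `l`;
it occurs before time `l` iff `j + s ≥ q`, i.e. iff `l` lies in one of the last `s` blocks. Hence
`C(F_{q,r}) = m s`, and `r ↦ r⁻¹ mod q` is an involution of the residues coprime to `q`. -/

open Set

section CanonicalCircuit

variable {N q : ℕ}

theorem castHom_canonicalCircuit (hdvd : q ∣ N) (r : ℕ) (l : Fin N) :
    ZMod.castHom hdvd (ZMod q) (canonicalCircuit N q r l) =
      1 + ((l.val / (N / q) : ℕ) : ZMod q) * r := by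
  rw [canonicalCircuit, map_natCast]
  push_cast
  rw [ZMod.natCast_self, mul_zero, add_zero]

theorem exists_canonicalCircuit_eq_of_castHom (hqN : q ≤ N) (hdvd : q ∣ N) (r : ℕ) {j : ℕ}
    (hj : j < q) {x : ZMod N} (hx : ZMod.castHom hdvd (ZMod q) x = 1 + (j : ZMod q) * r) :
    ∃ l : Fin N, l.val / (N / q) = j ∧ canonicalCircuit N q r l = x := by
  have hN : N = q * (N / q) := (Nat.mul_div_cancel' hdvd).symm
  have hm : 0 < N / q := Nat.div_pos hqN (by omega)
  have : NeZero N := ⟨by omega⟩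
  have : NeZero q := ⟨by omega⟩
  set y := x - (1 + (j : ZMod N) * r)
  obtain ⟨i, hi⟩ : q ∣ y.val := by
    rw [← ZMod.natCast_eq_zero_iff, ZMod.natCast_val, ← ZMod.castHom_apply (h := hdvd)]
    simp only [y, map_sub, map_add, map_one, map_mul, map_natCast, hx, sub_self]
  have hiN : i < N / q := by
    have := ZMod.val_lt y
    nlinarith
  have hdiv : (j * (N / q) + i) / (N / q) = j := by
    rw [add_comm, Nat.add_mul_div_right _ _ hm, Nat.div_eq_of_lt hiN, zero_add]
  have hmod : (j * (N / q) + i) % (N / q) = i := by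
    rw [add_comm, Nat.add_mul_mod_self_right, Nat.mod_eq_of_lt hiN]
  refine ⟨⟨j * (N / q) + i, by nlinarith⟩, hdiv, ?_⟩
  have hy : ((q * i : ℕ) : ZMod N) = y := by rw [← hi, ZMod.natCast_val, ZMod.cast_id]
  simp only [canonicalCircuit, hdiv, hmod]
  push_cast at hy ⊢
  rw [mul_comm (i : ZMod N), hy]
  ring

theorem exists_lt_canonicalCircuit_eq_add_one_iff [Fact (1 < q)] (hqN : q ≤ N) (hdvd : q ∣ N)
    {r s : ℕ} (hsq : s < q) (hsr : (s : ZMod q) * r = 1) (l : Fin N) :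
    (∃ k < l, canonicalCircuit N q r k = canonicalCircuit N q r l + 1) ↔
      q ≤ l.val / (N / q) + s := by
  have hs : s ≠ 0 := by rintro rfl; simp at hsr
  have hm : 0 < N / q := Nat.div_pos hqN (Nat.pos_of_ne_zero (NeZero.ne q))
  have hblock : ∀ k : Fin N, k.val / (N / q) < q := fun k =>
    Nat.div_lt_of_lt_mul (by rw [Nat.div_mul_cancel hdvd]; exact k.isLt)
  constructor
  · rintro ⟨k, hkl, hk⟩
    by_contra! hlt
    have hcast := congrArg (ZMod.castHom hdvd (ZMod q)) hk
    rw [map_add, map_one, castHom_canonicalCircuit, castHom_canonicalCircuit] at hcast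
    -- multiplying `k / m * r = l / m * r + 1` by `s = r⁻¹` shifts the block index by `s`
    have hshift : ((k.val / (N / q) : ℕ) : ZMod q) = ((l.val / (N / q) + s : ℕ) : ZMod q) := by
      push_cast
      linear_combination (s : ZMod q) * hcast +
        ((l.val / (N / q) : ℕ) - (k.val / (N / q) : ℕ) : ZMod q) * hsr
    rw [ZMod.natCast_eq_natCast_iff', Nat.mod_eq_of_lt (hblock k), Nat.mod_eq_of_lt hlt] at hshift
    have := Nat.div_le_div_right (c := N / q) hkl.le
    omega
  · intro hle
    have hcast : ZMod.castHom hdvd (ZMod q) (canonicalCircuit N q r l + 1) =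
        1 + ((l.val / (N / q) + s - q : ℕ) : ZMod q) * r := by
      rw [map_add, map_one, castHom_canonicalCircuit, Nat.cast_sub hle, ZMod.natCast_self]
      push_cast
      linear_combination -hsr
    obtain ⟨k, hk, hFk⟩ :=
      exists_canonicalCircuit_eq_of_castHom hqN hdvd r (by have := hblock l; omega) hcast
    exact ⟨k, Fin.lt_def.mpr (Nat.lt_of_div_lt_div (c := N / q) (by rw [hk]; omega)), hFk⟩

theorem Cinv_canonicalCircuit_eq_mul [Fact (1 < q)] (hqN : q ≤ N) (hdvd : q ∣ N) {r s : ℕ}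
    (hsq : s < q) (hsr : (s : ZMod q) * r = 1) :
    Cinv N (canonicalCircuit N q r) = N / q * s := by
  have hs : s ≠ 0 := by rintro rfl; simp at hsr
  have hm : 0 < N / q := Nat.div_pos hqN (Nat.pos_of_ne_zero (NeZero.ne q))
  have hN : q * (N / q) = N := Nat.mul_div_cancel' hdvd
  have hstart : (q - s) * (N / q) < N := (mul_lt_mul_of_pos_right (by omega) hm).trans_eq hN
  have hfilter : Finset.univ.filter (fun l : Fin N => ∃ k < l,
      canonicalCircuit N q r k = canonicalCircuit N q r l + 1) = Finset.Ici ⟨_, hstart⟩ := by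
    ext l
    rw [Finset.mem_filter, exists_lt_canonicalCircuit_eq_add_one_iff hqN hdvd hsq hsr,
      Finset.mem_Ici, Fin.le_def, ← Nat.le_div_iff_mul_le hm]
    simp only [Finset.mem_univ, true_and]
    omega
  rw [Cinv, hfilter, Fin.card_Ici]
  show N - (q - s) * (N / q) = N / q * s
  nth_rewrite 1 [← hN]
  rw [Nat.sub_mul, Nat.sub_sub_self (Nat.mul_le_mul_right _ hsq.le), mul_comm]

end CanonicalCircuit

theorem bijOn_val_inv_natCast (q : ℕ) [Fact (1 < q)] :
    BijOn (fun r : ℕ => ((r : ZMod q)⁻¹).val)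
      {r | 1 ≤ r ∧ r < q ∧ r.Coprime q} {r | 1 ≤ r ∧ r < q ∧ r.Coprime q} := by
  have hmaps : MapsTo (fun r : ℕ => ((r : ZMod q)⁻¹).val)
      {r | 1 ≤ r ∧ r < q ∧ r.Coprime q} {r | 1 ≤ r ∧ r < q ∧ r.Coprime q} := by
    rintro r ⟨-, -, hr⟩
    have hinv := ZMod.val_inv_mul hr
    refine ⟨Nat.one_le_iff_ne_zero.mpr fun h0 => ?_, ZMod.val_lt _,
      (ZMod.isUnit_iff_coprime _ _).mp (IsUnit.of_mul_eq_one _ hinv)⟩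
    simp [h0] at hinv
  have hinvol : LeftInvOn (fun r : ℕ => ((r : ZMod q)⁻¹).val)
      (fun r : ℕ => ((r : ZMod q)⁻¹).val) {r | 1 ≤ r ∧ r < q ∧ r.Coprime q} := by
    rintro r ⟨-, hrq, hr⟩
    have hunit : IsUnit (r : ZMod q) := (ZMod.isUnit_iff_coprime _ _).mpr hr
    simp only [ZMod.natCast_val, ZMod.cast_id', id,
      ZMod.inv_eq_of_mul_eq_one _ _ _ (ZMod.inv_mul_of_unit _ hunit), ZMod.val_cast_of_lt hrq]
  exact InvOn.bijOn ⟨hinvol, hinvol⟩ hmaps hmaps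

theorem Cinv_canonical_bijOn_general (N q : ℕ) (hq2 : 2 ≤ q) (hqN : q < N)
    (hdvd : q ∣ N) :
    Set.BijOn (fun r => Cinv N (canonicalCircuit N q r))
      {r : ℕ | 1 ≤ r ∧ r < q ∧ Nat.gcd q r = 1}
      {m : ℕ | ∃ p, 1 ≤ p ∧ p < q ∧ Nat.gcd p q = 1 ∧ m = (N / q) * p} := by
  have : Fact (1 < q) := ⟨hq2⟩
  have hm : N / q ≠ 0 := (Nat.div_pos hqN.le (by omega)).ne'
  have hdomain : {r : ℕ | 1 ≤ r ∧ r < q ∧ Nat.gcd q r = 1} =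
      {r | 1 ≤ r ∧ r < q ∧ r.Coprime q} := by
    simp only [Nat.gcd_comm q, Nat.Coprime]
  have hrange : {m : ℕ | ∃ p, 1 ≤ p ∧ p < q ∧ Nat.gcd p q = 1 ∧ m = (N / q) * p} =
      (N / q * ·) '' {p | 1 ≤ p ∧ p < q ∧ p.Coprime q} := by
    ext m; simp [Nat.Coprime, and_assoc, eq_comm]
  rw [hdomain, hrange]
  refine ((mul_right_injective₀ hm).injOn.bijOn_image.comp (bijOn_val_inv_natCast q)).congr ?_
  rintro r ⟨-, -, hr⟩
  exact (Cinv_canonicalCircuit_eq_mul hqN.le hdvd (ZMod.val_lt _) (ZMod.val_inv_mul hr)).symm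

/-- For a fixed divisor `q` of `N` with `2 ≤ q < N`, the map
`r ↦ C(F_{q,r})` is a bijection from `{r : 1 ≤ r < q, gcd(q,r) = 1}` onto
`{(N/q)·p : 1 ≤ p < q, gcd(p,q) = 1}`. -/
theorem Cinv_canonical_bijOn (N q : ℕ) (hN : 2 ≤ N) (hq2 : 2 ≤ q) (hqN : q < N)
    (hdvd : q ∣ N) :
    Set.BijOn (fun r => Cinv N (canonicalCircuit N q r))
      {r : ℕ | 1 ≤ r ∧ r < q ∧ Nat.gcd q r = 1}
      {m : ℕ | ∃ p, 1 ≤ p ∧ p < q ∧ Nat.gcd p q = 1 ∧ m = (N / q) * p} :=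
  Cinv_canonical_bijOn_general N q hq2 hqN hdvd
end

section
/- Let G be a group, N ≥ 2 an integer, and s, v ∈ G with s^N = 1, satisfying far-commutation. Let q be a divisor of N with q ≥ 2 and r ≥ 1 an integer, and let F := f_{(q−1)r} ⋯ f_r · f_0 be the Floquet operator of the canonical circuit. Then F is invariant under translation by q sites: s^{−q} F s^q = F. -/
/-- The translated gate `v_i := s^{-i} v s^i`. -/
def vgate {G : Type*} [Group G] (s v : G) (i : ℤ) : G := s ^ (-i) * v * s ^ i

/-- The layer `f_m := v_{m+(N/q−1)q} ⋯ v_{m+q} · v_m`. -/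
def layer {G : Type*} [Group G] (s v : G) (N q : ℕ) (m : ℤ) : G :=
  (((List.range (N / q)).reverse).map (fun k => vgate s v (m + (k : ℤ) * (q : ℤ)))).prod

/-- Far-commutation: gates commute unless their site difference is ±1 mod N. -/
def FarCommute {G : Type*} [Group G] (s v : G) (N : ℕ) : Prop :=
  ∀ i j : ℤ, ¬ (i - j ≡ 1 [ZMOD (N : ℤ)]) → ¬ (i - j ≡ -1 [ZMOD (N : ℤ)]) →
    vgate s v i * vgate s v j = vgate s v j * vgate s v i

/-- The Floquet operator `F = f_{(q−1)r} ⋯ f_r · f_0`. -/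
def floquet {G : Type*} [Group G] (s v : G) (N q r : ℕ) : G :=
  (((List.range q).reverse).map (fun j => layer s v N q ((j : ℤ) * (r : ℤ)))).prod

/-!
Conjugation by `s^q` shifts every gate by `q` sites. Writing `N = nq`, it turns the layer
`f_m = v_{m+(n-1)q} ⋯ v_m` into `v_{m+nq} ⋯ v_{m+q}`, and `v_{m+nq} = v_m` because `s^N = 1`:
the factors are merely rotated cyclically. The gates of one layer sit a multiple of `q` apart,
hence are never neighbours on the ring and commute, so the rotation does not change the layer.
Each layer, and therefore `F`, is fixed.
-/

theorem prod_map_succ_reverse_range {M : Type*} [Monoid M] (g : ℕ → M) (n : ℕ)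
    (hper : g n = g 0) (hcomm : ∀ k, Commute (g 0) (g k)) :
    ((List.range n).reverse.map (fun k => g (k + 1))).prod
      = ((List.range n).reverse.map g).prod := by
  cases n with
  | zero => rfl
  | succ n =>
    set P := ((List.range n).reverse.map (fun k => g (k + 1))).prod
    have hP : Commute (g 0) P :=
      Commute.list_prod_right _ _ fun y hy => by
        obtain ⟨k, -, rfl⟩ := List.mem_map.mp hy
        exact hcomm (k + 1)
    calc ((List.range (n + 1)).reverse.map (fun k => g (k + 1))).prod
        = g 0 * P := by
          rw [List.range_succ, List.reverse_append, List.map_append, List.prod_append,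
            ← hper]
          simp [P]
      _ = P * g 0 := hP.eq
      _ = ((List.range (n + 1)).reverse.map g).prod := by
          simp [List.range_succ_eq_map, List.map_reverse, List.map_map, P, Function.comp_def]

section Gates

variable {G : Type*} [Group G]

theorem inv_mul_list_prod_mul (a : G) (l : List G) :
    a⁻¹ * l.prod * a = (l.map fun x => a⁻¹ * x * a).prod := by
  rw [← MulAut.conj_symm_apply, map_list_prod]
  exact congrArg List.prod (List.map_congr_left fun x _ => MulAut.conj_symm_apply a x)

variable (s v : G)

theorem conj_vgate (q : ℕ) (i : ℤ) :
    (s ^ q)⁻¹ * vgate s v i * s ^ q = vgate s v (i + q) := by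
  simp only [vgate, ← zpow_natCast s q]
  group

theorem vgate_add_period {N : ℕ} (hs : s ^ N = 1) (i : ℤ) :
    vgate s v (i + N) = vgate s v i := by
  simp [vgate, zpow_add, zpow_natCast, hs]

/-- A multiple of `q` cannot be `±1` modulo a multiple `N` of `q ≥ 2`. -/
theorem FarCommute.commute_of_dvd_sub {N q : ℕ} (hcomm : FarCommute s v N) (hq : q ∣ N)
    (hq2 : 2 ≤ q) {i j : ℤ} (hij : (q : ℤ) ∣ i - j) :
    Commute (vgate s v i) (vgate s v j) := by
  have dvd_of_modEq : ∀ c : ℤ, i - j ≡ c [ZMOD (N : ℤ)] → (q : ℤ) ∣ c := fun c hmod => by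
    have hqN : (q : ℤ) ∣ c - (i - j) :=
      (Int.natCast_dvd_natCast.mpr hq).trans hmod.dvd
    simpa using dvd_add hqN hij
  have not_dvd_one : ¬ (q : ℤ) ∣ 1 := fun h => by
    have := Int.le_of_dvd one_pos h
    omega
  exact hcomm i j (fun h => not_dvd_one (dvd_of_modEq 1 h))
    (fun h => not_dvd_one (dvd_neg.mp (dvd_of_modEq (-1) h)))

theorem layer_eq_prod (N q : ℕ) (m : ℤ) :
    layer s v N q m =
      ((List.range (N / q)).reverse.map fun k : ℕ => vgate s v (m + k * q)).prod := by
  simp [layer, ← List.map_eq_flatMap, Function.comp_def]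

theorem conj_layer {N q : ℕ} (hs : s ^ N = 1) (hcomm : FarCommute s v N) (hq : q ∣ N)
    (hq2 : 2 ≤ q) (m : ℤ) :
    (s ^ q)⁻¹ * layer s v N q m * s ^ q = layer s v N q m := by
  rw [layer_eq_prod, inv_mul_list_prod_mul, List.map_map]
  set g : ℕ → G := fun k => vgate s v (m + k * q)
  have hshift : ∀ k : ℕ, (s ^ q)⁻¹ * g k * s ^ q = g (k + 1) := fun k => by
    simp only [g, conj_vgate]
    congr 1
    push_cast
    ring
  have hper : g (N / q) = g 0 := by
    simp only [g, Int.natCast_div, Int.ediv_mul_cancel (Int.natCast_dvd_natCast.mpr hq)]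
    simpa using vgate_add_period s v hs m
  have hcommute : ∀ k, Commute (g 0) (g k) := fun k =>
    hcomm.commute_of_dvd_sub s v hq hq2 ⟨-k, by ring⟩
  rw [show (fun x => (s ^ q)⁻¹ * x * s ^ q) ∘ g = fun k => g (k + 1) from funext hshift]
  exact prod_map_succ_reverse_range g _ hper hcommute

end Gates

theorem floquet_translation_invariant_general {G : Type*} [Group G] (N : ℕ)
    (s v : G) (hs : s ^ N = 1) (hcomm : FarCommute s v N)
    (q : ℕ) (hq : q ∣ N) (hq2 : 2 ≤ q) (r : ℕ) :
    (s ^ q)⁻¹ * floquet s v N q r * s ^ q = floquet s v N q r := by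
  rw [floquet, inv_mul_list_prod_mul, List.map_map]
  congr 1
  exact List.map_congr_left fun j _ => conj_layer s v hs hcomm hq hq2 _

/-- The Floquet operator `F = f_{(q−1)r} ⋯ f_r · f_0` is invariant
under translation by `q` sites. -/
theorem floquet_translation_invariant {G : Type*} [Group G] (N : ℕ) (hN : 2 ≤ N)
    (s v : G) (hs : s ^ N = 1) (hcomm : FarCommute s v N)
    (q : ℕ) (hq : q ∣ N) (hq2 : 2 ≤ q) (r : ℕ) (hr : 1 ≤ r) :
    (s ^ q)⁻¹ * floquet s v N q r * s ^ q = floquet s v N q r :=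
  floquet_translation_invariant_general N s v hs hcomm q hq hq2 r
end
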